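/- Consider the function G(t,x) = -2x cos(x) + ∫_{-1}^{1} (sin(x + arctan(xz)) - sin(x) - arctan(xz) cos(x)) (1/|z|) dz. Then G(t,x) = -2x cos(x) + 2 sin(x)(log 2 - log(√(x²+1) + 1)) for every x ∈ ℝ. -/

import Mathlib

/-!
Since `sin (x + arctan y) = (sin x + y cos x) / √(1 + y²)`, the integrand splits as
`sin x · (1/√(1 + x²z²) - 1)/|z| + cos x · (xz/√(1 + x²z²) - arctan (xz))/|z|`.
The second summand is odd in `z` and bounded by `2|x|` (as `|arctan y| ≤ |y|`), so it integrates
to `0`. The first is even and equals `-x²|z| / (s (1 + s))` with `s = √(1 + x²z²)`, which on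
`[0, 1]` is the derivative of `-log (1 + s)`; this gives `2 (log 2 - log (√(x² + 1) + 1))`.
-/

open Real intervalIntegral
open MeasureTheory (volume)

namespace intervalIntegral

variable {E : Type*} [NormedAddCommGroup E] [NormedSpace ℝ E] {f : ℝ → E}

theorem integral_of_odd (hf : Function.Odd f) (a : ℝ) : ∫ x in -a..a, f x = 0 := by
  have h := integral_comp_neg (a := -a) (b := a) f
  simp only [hf _, integral_neg, neg_neg] at h
  have : IsAddTorsionFree E := .of_isTorsionFree ℝ E
  exact self_eq_neg.1 h.symm

theorem integral_of_even (hf : Function.Even f) {a : ℝ}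
    (hfi : IntervalIntegrable f volume (-a) a) :
    ∫ x in -a..a, f x = 2 • ∫ x in 0..a, f x := by
  have hzero : (0 : ℝ) ∈ Set.uIcc (-a) a := by
    rcases le_total 0 a with ha | ha <;> simp [ha]
  have hleft : ∫ x in -a..0, f x = ∫ x in 0..a, f x := by
    simpa only [hf _, neg_zero] using (integral_comp_neg (a := 0) (b := a) f).symm
  rw [← integral_add_adjacent_intervals (hfi.mono_set (Set.uIcc_subset_uIcc_left hzero))
    (hfi.mono_set (Set.uIcc_subset_uIcc_right hzero)), hleft, two_smul]

end intervalIntegral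

lemma arctan_le_self {y : ℝ} (hy : 0 ≤ y) : arctan y ≤ y := by
  simpa [tan_arctan] using le_tan (arctan_nonneg.2 hy) (arctan_lt_pi_div_two y)

lemma abs_arctan_le_abs (y : ℝ) : |arctan y| ≤ |y| := by
  have hpos := arctan_le_self (abs_nonneg y)
  have hneg := arctan_mono (neg_abs_le y)
  rw [arctan_neg] at hneg
  exact abs_le.2 ⟨by linarith, (arctan_mono (le_abs_self y)).trans hpos⟩

lemma sin_add_arctan (x y : ℝ) : sin (x + arctan y) = (sin x + y * cos x) / √(1 + y ^ 2) := by
  rw [sin_add, sin_arctan, cos_arctan]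
  ring

lemma abs_div_sqrt_one_add_sq_sub_arctan_le (y : ℝ) :
    |y / √(1 + y ^ 2) - arctan y| ≤ 2 * |y| := by
  have hs : 1 ≤ √(1 + y ^ 2) := one_le_sqrt.2 (by nlinarith)
  have hdiv : |y / √(1 + y ^ 2)| ≤ |y| := by
    rw [abs_div, abs_of_pos (zero_lt_one.trans_le hs)]
    exact div_le_self (abs_nonneg y) hs
  calc |y / √(1 + y ^ 2) - arctan y| ≤ |y / √(1 + y ^ 2)| + |arctan y| := abs_sub _ _
    _ ≤ 2 * |y| := by linarith [abs_arctan_le_abs y]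

lemma sin_add_arctan_remainder_div_abs_eq (x z : ℝ) :
    (sin (x + arctan (x * z)) - sin x - arctan (x * z) * cos x) * (1 / |z|) =
      sin x * ((1 / √(1 + (x * z) ^ 2) - 1) / |z|) +
        cos x * ((x * z / √(1 + (x * z) ^ 2) - arctan (x * z)) / |z|) := by
  rw [sin_add_arctan]
  ring

lemma intervalIntegrable_div_sqrt_one_add_sq_sub_arctan_div_abs (x a b : ℝ) :
    IntervalIntegrable (fun z => (x * z / √(1 + (x * z) ^ 2) - arctan (x * z)) / |z|)
      volume a b := by
  refine (intervalIntegrable_const (c := 2 * |x|)).mono_fun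
    (Measurable.aestronglyMeasurable (by fun_prop)) (.of_forall fun z => ?_)
  dsimp only
  rcases eq_or_ne z 0 with rfl | hz
  · simp
  rw [norm_eq_abs, norm_eq_abs, abs_div, abs_abs, abs_of_nonneg (by positivity : 0 ≤ 2 * |x|),
    div_le_iff₀ (abs_pos.2 hz), mul_assoc, ← abs_mul]
  exact abs_div_sqrt_one_add_sq_sub_arctan_le (x * z)

theorem integral_div_sqrt_one_add_sq_sub_arctan_div_abs (x a : ℝ) :
    ∫ z in -a..a, (x * z / √(1 + (x * z) ^ 2) - arctan (x * z)) / |z| = 0 :=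
  integral_of_odd (fun z => by simp only [mul_neg, neg_sq, arctan_neg, abs_neg]; ring) a

-- Also true at `z = 0`, where both sides are `0` by the convention `a / 0 = 0`.
lemma inv_sqrt_one_add_sq_sub_one_div_abs (x z : ℝ) :
    (1 / √(1 + (x * z) ^ 2) - 1) / |z| =
      -(x ^ 2 * |z|) / (√(1 + (x * z) ^ 2) * (1 + √(1 + (x * z) ^ 2))) := by
  rcases eq_or_ne z 0 with rfl | hz
  · simp
  have hs : 0 < √(1 + (x * z) ^ 2) := sqrt_pos.2 (by positivity)
  have hs_sq : √(1 + x ^ 2 * z ^ 2) ^ 2 = 1 + x ^ 2 * z ^ 2 := sq_sqrt (by positivity)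
  field_simp
  linear_combination (-1) * hs_sq + x ^ 2 * sq_abs z

lemma hasDerivAt_neg_log_one_add_sqrt (x z : ℝ) :
    HasDerivAt (fun z => -log (1 + √(1 + (x * z) ^ 2)))
      (-(x ^ 2 * z) / (√(1 + (x * z) ^ 2) * (1 + √(1 + (x * z) ^ 2)))) z := by
  have hinner : HasDerivAt (fun z => 1 + (x * z) ^ 2) (2 * (x * z) * x) z := by
    simpa using (((hasDerivAt_id z).const_mul x).pow 2).const_add 1
  have hsqrt := (hinner.sqrt (by positivity)).const_add 1
  refine (hsqrt.log (by positivity)).fun_neg.congr_deriv ?_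
  field_simp

lemma continuous_inv_sqrt_one_add_sq_sub_one_div_abs (x : ℝ) :
    Continuous fun z : ℝ => (1 / √(1 + (x * z) ^ 2) - 1) / |z| := by
  simp_rw [inv_sqrt_one_add_sq_sub_one_div_abs]
  fun_prop (disch := intro; positivity)

theorem integral_inv_sqrt_one_add_sq_sub_one_div_abs (x : ℝ) :
    ∫ z in (-1 : ℝ)..1, (1 / √(1 + (x * z) ^ 2) - 1) / |z| =
      2 * (log 2 - log (√(x ^ 2 + 1) + 1)) := by
  have hderiv_cont : Continuous fun z : ℝ =>
      -(x ^ 2 * z) / (√(1 + (x * z) ^ 2) * (1 + √(1 + (x * z) ^ 2))) := by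
    fun_prop (disch := intro; positivity)
  rw [integral_of_even (fun z => by simp only [abs_neg, mul_neg, neg_sq])
    ((continuous_inv_sqrt_one_add_sq_sub_one_div_abs x).intervalIntegrable _ _),
    integral_congr (g := fun z : ℝ =>
      -(x ^ 2 * z) / (√(1 + (x * z) ^ 2) * (1 + √(1 + (x * z) ^ 2))))
      (fun z hz => by
        rw [inv_sqrt_one_add_sq_sub_one_div_abs, abs_of_nonneg (by simpa using hz.1)]),
    integral_eq_sub_of_hasDerivAt (fun z _ => hasDerivAt_neg_log_one_add_sqrt x z)
      (hderiv_cont.intervalIntegrable _ _)]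
  norm_num [add_comm]
  ring

/-- Closed form for the source term `G(t,x)` of the Kolmogorov equation in the arctan test
case. -/
theorem source_term_closed_form
    (G : ℝ → ℝ → ℝ)
    (hG : ∀ t x : ℝ, G t x = -2 * x * cos x +
      ∫ z in (-1:ℝ)..1,
        (sin (x + arctan (x * z)) - sin x - arctan (x * z) * cos x) * (1 / |z|)) :
    ∀ t x : ℝ,
      G t x = -2 * x * cos x
        + 2 * sin x * (Real.log 2 - Real.log (Real.sqrt (x ^ 2 + 1) + 1)) := by
  intro t x
  simp_rw [hG t x, sin_add_arctan_remainder_div_abs_eq]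
  rw [integral_add
      (((continuous_inv_sqrt_one_add_sq_sub_one_div_abs x).intervalIntegrable _ _).const_mul _)
      ((intervalIntegrable_div_sqrt_one_add_sq_sub_arctan_div_abs x _ _).const_mul _),
    integral_const_mul, integral_const_mul, integral_inv_sqrt_one_add_sq_sub_one_div_abs,
    integral_div_sqrt_one_add_sq_sub_arctan_div_abs x 1]
  ring
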